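/- If X₁ ⊆ R̲(X), X₂ ⊆ U \ R̲(X), and R̲(X₁) = ∅, then R̲(X₁ ∪ X₂) = R̲(X₂). -/

import Mathlib

/-!
A class `[x]` inside `X₁ ∪ X₂` lies inside `R̲(X)` or is disjoint from it, since `R̲(X)` is a
union of classes. In the first case it misses `X₂`, so `[x] ⊆ X₁`, which `R̲(X₁) = ∅` rules out;
in the second it misses `X₁`, so `[x] ⊆ X₂`.
-/

open Finset

variable {α : Type*} [Fintype α] [DecidableEq α]

/-- The lower approximation of `S` w.r.t. the equivalence relation `R`:
`{x : [x]_R ⊆ S}`. -/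
def lowerApprox (R : Setoid α) [DecidableRel R.r] (S : Finset α) : Finset α :=
  Finset.univ.filter fun x => ∀ y, R.r x y → y ∈ S

section LowerApprox

variable (R : Setoid α) [DecidableRel R.r]

theorem mem_lowerApprox {S : Finset α} {x : α} :
    x ∈ lowerApprox R S ↔ ∀ y, R.r x y → y ∈ S := by
  simp [lowerApprox]

theorem lowerApprox_mono {S T : Finset α} (hST : S ⊆ T) : lowerApprox R S ⊆ lowerApprox R T :=
  fun _ hx => (mem_lowerApprox R).2 fun y hxy => hST ((mem_lowerApprox R).1 hx y hxy)

theorem mem_lowerApprox_of_rel {S : Finset α} {x y : α} (hx : x ∈ lowerApprox R S)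
    (hxy : R.r x y) : y ∈ lowerApprox R S :=
  (mem_lowerApprox R).2 fun z hyz => (mem_lowerApprox R).1 hx z (R.trans hxy hyz)

theorem lowerApprox_union_of_saturated {L X₁ X₂ : Finset α}
    (hL : ∀ x y, R.r x y → x ∈ L → y ∈ L) (h₁ : X₁ ⊆ L) (h₂ : Disjoint X₂ L) :
    lowerApprox R (X₁ ∪ X₂) = lowerApprox R X₁ ∪ lowerApprox R X₂ := by
  refine Subset.antisymm (fun x hx => ?_)
    (union_subset (lowerApprox_mono R subset_union_left) (lowerApprox_mono R subset_union_right))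
  rw [mem_lowerApprox] at hx
  rw [mem_union, mem_lowerApprox, mem_lowerApprox]
  by_cases hxL : x ∈ L
  · refine Or.inl fun y hxy => ?_
    have hyL : y ∈ L := hL x y hxy hxL
    exact (mem_union.1 (hx y hxy)).resolve_right fun hy => disjoint_left.1 h₂ hy hyL
  · refine Or.inr fun y hxy => ?_
    have hyL : y ∉ L := fun hyL => hxL (hL y x (R.symm hxy) hyL)
    exact (mem_union.1 (hx y hxy)).resolve_left fun hy => hyL (h₁ hy)

end LowerApprox

theorem lower_union_eq_of_lower_empty (R : Setoid α) [DecidableRel R.r] (X : Finset α)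
    (X₁ X₂ : Finset α) (h₁ : X₁ ⊆ lowerApprox R X) (h₂ : X₂ ⊆ Finset.univ \ lowerApprox R X)
    (h : lowerApprox R X₁ = ∅) :
    lowerApprox R (X₁ ∪ X₂) = lowerApprox R X₂ := by
  have hsat : ∀ x y, R.r x y → x ∈ lowerApprox R X → y ∈ lowerApprox R X :=
    fun _ _ hxy hx => mem_lowerApprox_of_rel R hx hxy
  rw [lowerApprox_union_of_saturated R hsat h₁ (subset_sdiff.1 h₂).2, h, empty_union]
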